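/- Let G = (S, L, H) be an n-channel open quantum system and define G⁻¹ = (S†, −S†L, −H), where (S†L)_j = Σ_k (S_{kj})* L_k. Then G⁻¹ is again an n-channel open quantum system (S† is unitary) and G⁻¹ ◁ G = G ◁ G⁻¹ = (I, 0, 0), componentwise as triples. -/

import Mathlib

noncomputable section

open Finset

variable {E : Type*} [NormedAddCommGroup E] [InnerProductSpace ℂ E] [CompleteSpace E]

/-- `Im{A} = (A - A*)/(2i)`. -/
def imOp (A : E →L[ℂ] E) : E →L[ℂ] E := (2 * Complex.I)⁻¹ • (A - star A)

/-- An open quantum system `(S, L, H)` with field channels indexed by `ι`: an `ι×ι` matrix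
`S` of bounded operators, an `ι`-vector `L` of bounded operators, and an operator `H`. -/
structure QOpen (ι : Type*) (E : Type*) [NormedAddCommGroup E] [InnerProductSpace ℂ E]
    [CompleteSpace E] where
  S : Matrix ι ι (E →L[ℂ] E)
  L : ι → E →L[ℂ] E
  H : E →L[ℂ] E

/-- The scattering matrix of `G` is unitary: `S†S = SS† = I`. -/
def QOpen.unitaryS {ι : Type*} [Fintype ι] [DecidableEq ι] (G : QOpen ι E) : Prop :=
  G.S.conjTranspose * G.S = 1 ∧ G.S * G.S.conjTranspose = 1

/-- The series product `G₂ ◁ G₁ = (S₂S₁, L₂ + S₂L₁, H₁ + H₂ + Im{L₂†S₂L₁})`. -/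
def series {ι : Type*} [Fintype ι] (G₂ G₁ : QOpen ι E) : QOpen ι E where
  S := G₂.S * G₁.S
  L := fun j => G₂.L j + ∑ k, G₂.S j k * G₁.L k
  H := G₁.H + G₂.H + imOp (∑ j, ∑ k, star (G₂.L j) * G₂.S j k * G₁.L k)

/-- The inverse system `G⁻¹ = (S†, −S†L, −H)`. -/
def QOpen.inv {ι : Type*} [Fintype ι] (G : QOpen ι E) : QOpen ι E where
  S := G.S.conjTranspose
  L := fun j => -(∑ k, star (G.S k j) * G.L k)
  H := -G.H

/-! In vector notation `G⁻¹ ◁ G = (S†S, -S†L + S†L, Im{-(S†L)†(S†L)})`, and the last entry vanishes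
because its argument is self-adjoint; so `G⁻¹ ◁ G = (I, 0, 0)` uses only `S†S = I`. When also
`SS† = I`, the inversion is an involution, and `G ◁ G⁻¹ = (G⁻¹)⁻¹ ◁ G⁻¹` is the same identity
applied to `G⁻¹`. -/

open Matrix

theorem imOp_eq_zero_of_isSelfAdjoint {A : E →L[ℂ] E} (hA : IsSelfAdjoint A) : imOp A = 0 := by
  simp [imOp, hA.star_eq]

theorem isSelfAdjoint_star_dotProduct_self {n R : Type*} [Fintype n] [Ring R] [StarRing R]
    (v : n → R) : IsSelfAdjoint (star v ⬝ᵥ v) := by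
  have h := star_dotProduct_star v (star v)
  rw [star_star] at h
  exact h.symm

namespace QOpen

variable {ι : Type*}

theorem ext {G G' : QOpen ι E} (hS : G.S = G'.S) (hL : G.L = G'.L) (hH : G.H = G'.H) :
    G = G' := by
  cases G; cases G'; congr

variable [Fintype ι]

theorem inv_S (G : QOpen ι E) : G.inv.S = G.Sᴴ := rfl

theorem inv_L (G : QOpen ι E) : G.inv.L = -(G.Sᴴ *ᵥ G.L) := rfl

theorem inv_H (G : QOpen ι E) : G.inv.H = -G.H := rfl

theorem inv_inv [DecidableEq ι] {G : QOpen ι E} (h : G.S * G.Sᴴ = 1) : G.inv.inv = G := by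
  refine ext (conjTranspose_conjTranspose _) ?_ (neg_neg _)
  rw [inv_L, inv_L, inv_S, conjTranspose_conjTranspose, mulVec_neg, neg_neg, mulVec_mulVec, h,
    one_mulVec]

theorem unitaryS.inv [DecidableEq ι] {G : QOpen ι E} (hG : G.unitaryS) : G.inv.unitaryS := by
  rw [unitaryS, inv_S, conjTranspose_conjTranspose]
  exact hG.symm

end QOpen

section

variable {ι : Type*} [Fintype ι]

theorem series_L (G₂ G₁ : QOpen ι E) : (series G₂ G₁).L = G₂.L + G₂.S *ᵥ G₁.L := rfl

theorem series_H (G₂ G₁ : QOpen ι E) :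
    (series G₂ G₁).H = G₁.H + G₂.H + imOp (star G₂.L ⬝ᵥ (G₂.S *ᵥ G₁.L)) := by
  simp only [series, dotProduct, mulVec, Pi.star_apply, Finset.mul_sum, mul_assoc]

theorem series_inv_self [DecidableEq ι] {G : QOpen ι E} (h : G.Sᴴ * G.S = 1) :
    series G.inv G = QOpen.mk 1 0 0 := by
  refine QOpen.ext h ?_ ?_
  · rw [series_L, QOpen.inv_L, QOpen.inv_S, neg_add_cancel]
  · have hcross : IsSelfAdjoint (star G.inv.L ⬝ᵥ (G.inv.S *ᵥ G.L)) := by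
      rw [QOpen.inv_L, QOpen.inv_S, star_neg, neg_dotProduct]
      exact (isSelfAdjoint_star_dotProduct_self _).neg
    rw [series_H, imOp_eq_zero_of_isSelfAdjoint hcross, QOpen.inv_H, add_neg_cancel, add_zero]

end

/-- for an open quantum system `G = (S, L, H)`, the triple
`G⁻¹ = (S†, −S†L, −H)` is again an open quantum system (`S†` is unitary and `−H` is
self-adjoint), and `G⁻¹ ◁ G = G ◁ G⁻¹ = (I, 0, 0)` componentwise as triples. -/
theorem stmt_3 {ι : Type*} [Fintype ι] [DecidableEq ι]
    (G : QOpen ι E) (hS : G.unitaryS) (hH : IsSelfAdjoint G.H) :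
    (G.inv.unitaryS ∧ IsSelfAdjoint G.inv.H)
      ∧ series G.inv G = QOpen.mk (1 : Matrix ι ι (E →L[ℂ] E)) 0 0
      ∧ series G G.inv = QOpen.mk (1 : Matrix ι ι (E →L[ℂ] E)) 0 0 := by
  have hSinv : G.inv.unitaryS := hS.inv
  have hright := series_inv_self hSinv.1
  rw [QOpen.inv_inv hS.2] at hright
  exact ⟨⟨hSinv, hH.neg⟩, series_inv_self hS.1, hright⟩
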